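/- arXiv:2502.11226 — 2 statements merged into one kernel-verified Lean document; each statement's English description precedes it below -/
import Mathlib

section
/- Let M be a conical refinement commutative monoid with an action of an abelian group Γ by monoid automorphisms, and let I be a Γ-order ideal of M. Then the orthogonal set I^⊥ = {a ∈ M | a ∥ I} ∪ {0} is again a Γ-order ideal of M. -/
/-! For a nonzero `a`, being incomparable with every nonzero element of the order ideal `I` just
says that no nonzero element of `I` lies below `a`; by conicality the same holds for `a = 0`.
In this form closure under `Γ` and under passing to smaller elements are immediate, and closure
under addition follows from the Riesz decomposition `x ≤ a + b ⇒ x = y + z` with `y ≤ a`, `z ≤ b`,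
since `y` and `z` again lie in `I`. -/

/-- A commutative monoid is conical if `a + b = 0` implies `a = 0` and `b = 0`. -/
def IsConical (M : Type*) [AddCommMonoid M] : Prop :=
  ∀ a b : M, a + b = 0 → a = 0 ∧ b = 0

/-- The refinement property for a commutative monoid. -/
def IsRefinement (M : Type*) [AddCommMonoid M] : Prop :=
  ∀ a₀ a₁ b₀ b₁ : M, a₀ + a₁ = b₀ + b₁ →
    ∃ c₀₀ c₀₁ c₁₀ c₁₁ : M,
      a₀ = c₀₀ + c₀₁ ∧ a₁ = c₁₀ + c₁₁ ∧ b₀ = c₀₀ + c₁₀ ∧ b₁ = c₀₁ + c₁₁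

variable {M : Type*} [AddCommMonoid M]

/-- The algebraic preorder: `a ≤ b` iff `b = a + c` for some `c`. -/
def AlgLE (a b : M) : Prop := ∃ c, b = a + c

/-- Strict algebraic order: `a < b` iff `b = a + c` for some nonzero `c`. -/
def AlgLT (a b : M) : Prop := ∃ c, c ≠ 0 ∧ b = a + c

/-- Two elements are comparable if they are equal or one is strictly below the other. -/
def CmpRel (a b : M) : Prop := a = b ∨ AlgLT a b ∨ AlgLT b a

/-- `a ∥ I` : `a` is incomparable with every nonzero element of `I`. -/
def PerpTo (a : M) (I : Set M) : Prop := ∀ x ∈ I, x ≠ 0 → ¬ CmpRel a x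

/-- An order ideal: a submonoid which is downward closed for the algebraic preorder. -/
def IsOrderIdeal (I : Set M) : Prop :=
  (0 : M) ∈ I ∧ (∀ a b : M, a ∈ I → b ∈ I → a + b ∈ I) ∧
    ∀ a b : M, b ∈ I → AlgLE a b → a ∈ I

/-- The orthogonal set `I^⊥ = {a | a ∥ I} ∪ {0}`. -/
def perpSet (I : Set M) : Set M := {a : M | a = 0 ∨ PerpTo a I}

variable (Γ : Type*) [CommGroup Γ] [DistribMulAction Γ M]

/-- A Γ-order ideal: an order ideal invariant under the action of Γ. -/
def IsGammaOrderIdeal (I : Set M) : Prop :=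
  IsOrderIdeal I ∧ ∀ (g : Γ) (a : M), a ∈ I → g • a ∈ I

/-- An essential Γ-order ideal: meets every nonzero Γ-order ideal nontrivially. -/
def IsEssential (I : Set M) : Prop :=
  IsGammaOrderIdeal Γ I ∧
    ∀ J : Set M, IsGammaOrderIdeal Γ J → J ≠ {0} → I ∩ J ≠ {0}

/-- A uniform Γ-order ideal: nonzero, and any two nonzero Γ-order ideals
contained in it intersect nontrivially. -/
def IsUniform (I : Set M) : Prop :=
  IsGammaOrderIdeal Γ I ∧ I ≠ {0} ∧
    ∀ J K : Set M, IsGammaOrderIdeal Γ J → IsGammaOrderIdeal Γ K →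
      J ⊆ I → K ⊆ I → J ≠ {0} → K ≠ {0} → J ∩ K ≠ {0}

theorem AlgLE.refl (a : M) : AlgLE a a := ⟨0, (add_zero a).symm⟩

theorem AlgLE.trans {a b c : M} (hab : AlgLE a b) (hbc : AlgLE b c) : AlgLE a c := by
  obtain ⟨d, rfl⟩ := hab
  obtain ⟨e, rfl⟩ := hbc
  exact ⟨d + e, add_assoc a d e⟩

theorem AlgLE.smul {G : Type*} [Monoid G] [DistribMulAction G M] (g : G) {a b : M}
    (hab : AlgLE a b) : AlgLE (g • a) (g • b) := by
  obtain ⟨c, rfl⟩ := hab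
  exact ⟨g • c, smul_add g a c⟩

theorem IsConical.eq_zero_of_algLE_zero (hcon : IsConical M) {x : M} (hx : AlgLE x 0) :
    x = 0 := by
  obtain ⟨c, hc⟩ := hx
  exact (hcon x c hc.symm).1

theorem IsRefinement.exists_add_of_algLE_add (href : IsRefinement M) {x a b : M}
    (hx : AlgLE x (a + b)) : ∃ y z, AlgLE y a ∧ AlgLE z b ∧ x = y + z := by
  obtain ⟨d, hd⟩ := hx
  obtain ⟨c₀₀, c₀₁, c₁₀, c₁₁, hx, -, ha, hb⟩ := href x d a b hd.symm
  exact ⟨c₀₀, c₀₁, ⟨c₁₀, ha⟩, ⟨c₁₁, hb⟩, hx⟩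

theorem mem_perpSet_iff (hcon : IsConical M) {I : Set M}
    (hdown : ∀ a b : M, b ∈ I → AlgLE a b → a ∈ I) {a : M} :
    a ∈ perpSet I ↔ ∀ x ∈ I, AlgLE x a → x = 0 := by
  constructor
  · rintro (rfl | hperp) x hx hxa
    · exact hcon.eq_zero_of_algLE_zero hxa
    · by_contra hx0
      obtain ⟨c, hc⟩ := hxa
      refine hperp x hx hx0 ?_
      rcases eq_or_ne c 0 with rfl | hc0
      · exact Or.inl (by rw [hc, add_zero])
      · exact Or.inr (Or.inr ⟨c, hc0, hc⟩)
  · intro hbelow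
    by_cases ha0 : a = 0
    · exact Or.inl ha0
    refine Or.inr fun x hx hx0 hcmp => ?_
    rcases hcmp with rfl | ⟨c, -, hc⟩ | ⟨c, -, hc⟩
    · exact hx0 (hbelow a hx (AlgLE.refl a))
    · exact ha0 (hbelow a (hdown a x hx ⟨c, hc⟩) (AlgLE.refl a))
    · exact hx0 (hbelow x hx ⟨c, hc⟩)

theorem stmt_2 {M : Type*} [AddCommMonoid M] (Γ : Type*) [CommGroup Γ]
    [DistribMulAction Γ M]
    (hcon : IsConical M) (href : IsRefinement M)
    (I : Set M) (hI : IsGammaOrderIdeal Γ I) :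
    IsGammaOrderIdeal Γ (perpSet I) := by
  obtain ⟨⟨-, -, hdown⟩, hinv⟩ := hI
  simp only [IsGammaOrderIdeal, IsOrderIdeal, mem_perpSet_iff hcon hdown]
  refine ⟨⟨fun x _ hx => hcon.eq_zero_of_algLE_zero hx, ?_, ?_⟩, ?_⟩
  · intro a b ha hb x hx hxab
    obtain ⟨y, z, hya, hzb, rfl⟩ := href.exists_add_of_algLE_add hxab
    have hy : y = 0 := ha y (hdown y _ hx ⟨z, rfl⟩) hya
    have hz : z = 0 := hb z (hdown z _ hx ⟨y, add_comm y z⟩) hzb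
    rw [hy, hz, add_zero]
  · exact fun a b hb hab x hx hxa => hb x hx (hxa.trans hab)
  · intro g a ha x hx hxga
    have hle : AlgLE (g⁻¹ • x) a := by simpa using hxga.smul g⁻¹
    exact (smul_eq_zero_iff_eq g⁻¹).mp (ha _ (hinv g⁻¹ x hx) hle)
end

section
/- Let M be a conical refinement commutative Γ-monoid and I a Γ-order ideal of M. If M = I ⊕ I^⊥ (i.e., M = I + I^⊥ and I ∩ I^⊥ = {0}), then I is regular, that is, I^⊥⊥ = I. -/
variable {M : Type*} [AddCommMonoid M]

variable (Γ : Type*) [CommGroup Γ] [DistribMulAction Γ M]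

/-! Orthogonality is symmetric, so `I ⊆ I^⊥⊥` for every `I`. Conversely, write `m ∈ I^⊥⊥` as
`a + b` with `a ∈ I` and `b ∈ I^⊥`; then `b ≤ m`, so `b` is comparable with `m`, which forces
`b = 0` and `m = a ∈ I`. -/

theorem CmpRel.symm {a b : M} (h : CmpRel a b) : CmpRel b a := by
  rcases h with h | h | h
  exacts [Or.inl h.symm, Or.inr (Or.inr h), Or.inr (Or.inl h)]

theorem AlgLE.cmpRel {a b : M} (h : AlgLE a b) : CmpRel a b := by
  obtain ⟨c, rfl⟩ := h
  by_cases hc : c = 0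
  · exact Or.inl (by rw [hc, add_zero])
  · exact Or.inr (Or.inl ⟨c, hc, rfl⟩)

theorem subset_perpSet_perpSet (I : Set M) : I ⊆ perpSet (perpSet I) := by
  intro m hm
  by_cases hm0 : m = 0
  · exact Or.inl hm0
  refine Or.inr fun x hx hx0 hmx => ?_
  rcases hx with rfl | hx
  · exact hx0 rfl
  · exact hx m hm hm0 hmx.symm

theorem perpSet_perpSet_subset_of_eq_add {I : Set M} (h0 : (0 : M) ∈ I)
    (hsum : ∀ x : M, ∃ a ∈ I, ∃ b ∈ perpSet I, x = a + b) : perpSet (perpSet I) ⊆ I := by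
  rintro m (rfl | hm)
  · exact h0
  obtain ⟨a, ha, b, hb, rfl⟩ := hsum m
  by_cases hb0 : b = 0
  · rwa [hb0, add_zero]
  · exact absurd (AlgLE.cmpRel ⟨a, add_comm a b⟩).symm (hm b hb hb0)

theorem stmt_3_general {M : Type*} [AddCommMonoid M] (Γ : Type*) [CommGroup Γ]
    [DistribMulAction Γ M]
    (I : Set M) (hI : IsGammaOrderIdeal Γ I)
    (hsum : ∀ x : M, ∃ a ∈ I, ∃ b ∈ perpSet I, x = a + b) :
    perpSet (perpSet I) = I :=
  (perpSet_perpSet_subset_of_eq_add hI.1.1 hsum).antisymm (subset_perpSet_perpSet I)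

theorem stmt_3 {M : Type*} [AddCommMonoid M] (Γ : Type*) [CommGroup Γ]
    [DistribMulAction Γ M]
    (hcon : IsConical M) (href : IsRefinement M)
    (I : Set M) (hI : IsGammaOrderIdeal Γ I)
    (hsum : ∀ x : M, ∃ a ∈ I, ∃ b ∈ perpSet I, x = a + b)
    (hdisj : I ∩ perpSet I = {0}) :
    perpSet (perpSet I) = I :=
  stmt_3_general Γ I hI hsum
end
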